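/- For non-negative integers N, i, j, the generating function P_{2N+1}(i,j,q) for partitions into distinct parts ≤ 2N+1 with i odd-indexed and j even-indexed odd parts equals q^{2i²−i+2j²+j}·(−q²;q²)_{N−i−j+1}·[N+1 choose i, j]_{q⁴}·(1−q^{2(N+i−j+1)})/(1−q^{4(N+1)}). -/

import Mathlib

def IsDistinctPartition (π : List ℕ) : Prop :=
  π.Chain' (· > ·) ∧ ∀ p ∈ π, 0 < p

def IsPartition (π : List ℕ) : Prop :=
  π.Chain' (· ≥ ·) ∧ ∀ p ∈ π, 0 < p

def oddIdxOdd (π : List ℕ) : ℕ :=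
  (π.zipIdx.filter fun p => p.2 % 2 == 0 && p.1 % 2 == 1).length

def evenIdxOdd (π : List ℕ) : ℕ :=
  (π.zipIdx.filter fun p => p.2 % 2 == 1 && p.1 % 2 == 1).length

def bgRank (π : List ℕ) : ℤ := (oddIdxOdd π : ℤ) - evenIdxOdd π

def altSum : List ℕ → ℤ
  | [] => 0
  | a :: t => (a : ℤ) - altSum t

noncomputable def gaussPoly : ℕ → ℕ → Polynomial ℚ
  | _, 0 => 1
  | 0, _ + 1 => 0
  | m + 1, r + 1 => gaussPoly m r + Polynomial.X ^ (r + 1) * gaussPoly m (r + 1)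

noncomputable def gaussZ (m : ℕ) (r : ℤ) : Polynomial ℚ :=
  if 0 ≤ r then gaussPoly m r.toNat else 0

noncomputable def P (N i j : ℕ) : PowerSeries ℚ :=
  PowerSeries.mk fun n =>
    (Nat.card {π : List ℕ // IsDistinctPartition π ∧ (∀ p ∈ π, p ≤ N) ∧ π.sum = n ∧
      oddIdxOdd π = i ∧ evenIdxOdd π = j} : ℚ)

/-! Removing the largest part `M + 1` from a distinct partition shifts every remaining part by one
position, which swaps odd- and even-indexed odd parts; this gives a recurrence in `M` for `P M i j`.
Splitting it by the parity of `M`, an induction on `N` reduces the theorem to contiguous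
relations between the closed forms of `P (2N)` and `P (2N+1)`, which all follow from the factorial
formula `[M; a, b] (q;q)_a (q;q)_b (q;q)_{M-a-b} = (q;q)_M` for the `q`-trinomial coefficient. -/

section QBinomial

open Polynomial

lemma gaussPoly_zero_right (m : ℕ) : gaussPoly m 0 = 1 := by cases m <;> rfl

lemma gaussPoly_succ_succ (m r : ℕ) :
    gaussPoly (m + 1) (r + 1) = gaussPoly m r + X ^ (r + 1) * gaussPoly m (r + 1) := rfl

lemma gaussPoly_eq_zero_of_lt {m r : ℕ} (h : m < r) : gaussPoly m r = 0 := by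
  induction m generalizing r with
  | zero => obtain ⟨r, rfl⟩ := Nat.exists_eq_add_one_of_ne_zero h.ne'; rfl
  | succ m ih =>
    obtain ⟨r, rfl⟩ := Nat.exists_eq_add_one_of_ne_zero (by omega : r ≠ 0)
    rw [gaussPoly_succ_succ, ih (by omega), ih (by omega), mul_zero, add_zero]

lemma gaussPoly_self (m : ℕ) : gaussPoly m m = 1 := by
  induction m with
  | zero => rfl
  | succ m ih =>
    rw [gaussPoly_succ_succ, ih, gaussPoly_eq_zero_of_lt m.lt_succ_self, mul_zero, add_zero]

/-- The `q`-factorial `(q;q)_m`. -/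
noncomputable def qFactorial (m : ℕ) : ℚ[X] := ∏ k ∈ Finset.range m, (1 - X ^ (k + 1))

@[simp] lemma qFactorial_zero : qFactorial 0 = 1 := Finset.prod_range_zero _

lemma qFactorial_succ (m : ℕ) : qFactorial (m + 1) = qFactorial m * (1 - X ^ (m + 1)) :=
  Finset.prod_range_succ _ _

lemma qFactorial_ne_zero (m : ℕ) : qFactorial m ≠ 0 :=
  Finset.prod_ne_zero_iff.2 fun k _ h => by simpa using congrArg (eval 0) h

lemma gaussPoly_mul_qFactorial_mul_qFactorial {m r : ℕ} (h : r ≤ m) :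
    gaussPoly m r * qFactorial r * qFactorial (m - r) = qFactorial m := by
  induction m generalizing r with
  | zero => obtain rfl := Nat.le_zero.1 h; simp [gaussPoly_zero_right]
  | succ m ih =>
    rcases r with _ | r
    · simp [gaussPoly_zero_right]
    rcases (Nat.le_of_succ_le_succ h).lt_or_eq with hr | rfl
    · obtain ⟨c, rfl⟩ := Nat.exists_eq_add_of_lt hr
      have hr := ih (r := r) (by omega)
      have hr1 := ih (r := r + 1) (by omega)
      rw [show r + c + 1 - r = c + 1 by omega, qFactorial_succ c] at hr
      rw [show r + c + 1 - (r + 1) = c by omega, qFactorial_succ r] at hr1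
      rw [show r + c + 1 + 1 - (r + 1) = c + 1 by omega, qFactorial_succ (r + c + 1),
        qFactorial_succ r, qFactorial_succ c, gaussPoly_succ_succ]
      linear_combination (1 - X ^ (r + 1)) * hr + X ^ (r + 1) * (1 - X ^ (c + 1)) * hr1
    · rw [gaussPoly_self, Nat.sub_self, one_mul, qFactorial_zero, mul_one]

noncomputable def qTrinomial (M a b : ℕ) : ℚ[X] := gaussPoly M a * gaussPoly (M - a) b

lemma qTrinomial_eq_zero_of_lt {M a b : ℕ} (h : M < a + b) : qTrinomial M a b = 0 := by
  rcases le_or_gt a M with ha | ha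
  · rw [qTrinomial, gaussPoly_eq_zero_of_lt (by omega : M - a < b), mul_zero]
  · rw [qTrinomial, gaussPoly_eq_zero_of_lt ha, zero_mul]

lemma qTrinomial_mul_qFactorial {M a b : ℕ} (h : a + b ≤ M) :
    qTrinomial M a b * (qFactorial a * qFactorial b * qFactorial (M - a - b)) = qFactorial M := by
  rw [← gaussPoly_mul_qFactorial_mul_qFactorial (by omega : a ≤ M),
    ← gaussPoly_mul_qFactorial_mul_qFactorial (by omega : b ≤ M - a), qTrinomial]
  ring

lemma qFactorial_mul_qFactorial_mul_qFactorial_ne_zero (a b c : ℕ) :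
    qFactorial a * qFactorial b * qFactorial c ≠ 0 := by
  simp [qFactorial_ne_zero]

lemma qTrinomial_comm (M a b : ℕ) : qTrinomial M a b = qTrinomial M b a := by
  rcases le_or_gt (a + b) M with h | h
  · refine mul_right_cancel₀
      (qFactorial_mul_qFactorial_mul_qFactorial_ne_zero a b (M - a - b)) ?_
    rw [qTrinomial_mul_qFactorial h, mul_comm (qFactorial a), Nat.sub_right_comm,
      qTrinomial_mul_qFactorial (by omega)]
  · rw [qTrinomial_eq_zero_of_lt h, qTrinomial_eq_zero_of_lt (by omega)]

lemma qTrinomial_succ_mul (N a b : ℕ) :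
    qTrinomial (N + 1) a b * (1 - X ^ (N + 1 - a - b)) = qTrinomial N a b * (1 - X ^ (N + 1)) := by
  rcases le_or_gt (a + b) N with h | h
  · refine mul_right_cancel₀
      (qFactorial_mul_qFactorial_mul_qFactorial_ne_zero a b (N - a - b)) ?_
    have hsucc := qFactorial_succ (N - a - b)
    rw [show N - a - b + 1 = N + 1 - a - b by omega] at hsucc
    linear_combination qTrinomial (N + 1) a b * qFactorial a * qFactorial b * hsucc.symm
      + qTrinomial_mul_qFactorial (by omega : a + b ≤ N + 1) + qFactorial_succ N
      - (1 - X ^ (N + 1)) * qTrinomial_mul_qFactorial h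
  · rw [show N + 1 - a - b = 0 by omega, qTrinomial_eq_zero_of_lt h]
    ring

lemma qTrinomial_succ_succ_mul (N a b : ℕ) :
    qTrinomial (N + 1) (a + 1) b * (1 - X ^ (a + 1)) = (1 - X ^ (N + 1)) * qTrinomial N b a := by
  rcases le_or_gt (a + b) N with h | h
  · refine mul_right_cancel₀
      (qFactorial_mul_qFactorial_mul_qFactorial_ne_zero a b (N - a - b)) ?_
    have hsucc := qTrinomial_mul_qFactorial (by omega : a + 1 + b ≤ N + 1)
    rw [show N + 1 - (a + 1) - b = N - a - b by omega, qFactorial_succ a] at hsucc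
    have hswap := qTrinomial_mul_qFactorial (by omega : b + a ≤ N)
    rw [Nat.sub_right_comm] at hswap
    linear_combination hsucc + qFactorial_succ N - (1 - X ^ (N + 1)) * hswap
  · rw [qTrinomial_eq_zero_of_lt (by omega : N + 1 < a + 1 + b),
      qTrinomial_eq_zero_of_lt (by omega : N < b + a)]
    ring

end QBinomial

open Finset PowerSeries

lemma oddIdxOdd_cons (a : ℕ) (t : List ℕ) : oddIdxOdd (a :: t) = a % 2 + evenIdxOdd t := by
  simp only [oddIdxOdd, evenIdxOdd, List.zipIdx_cons', List.filter_cons, List.filter_map]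
  have h : ((fun p : ℕ × ℕ => p.2 % 2 == 0 && p.1 % 2 == 1) ∘ Prod.map id (· + 1)) =
      fun p => p.2 % 2 == 1 && p.1 % 2 == 1 := by
    funext ⟨p, k⟩
    rcases Nat.mod_two_eq_zero_or_one k with hk | hk <;> simp [Nat.add_mod, hk]
  rcases Nat.mod_two_eq_zero_or_one a with ha | ha <;> simp [ha, h]; omega

lemma evenIdxOdd_cons (a : ℕ) (t : List ℕ) : evenIdxOdd (a :: t) = oddIdxOdd t := by
  simp only [oddIdxOdd, evenIdxOdd, List.zipIdx_cons', List.filter_cons, List.filter_map]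
  have h : ((fun p : ℕ × ℕ => p.2 % 2 == 1 && p.1 % 2 == 1) ∘ Prod.map id (· + 1)) =
      fun p => p.2 % 2 == 0 && p.1 % 2 == 1 := by
    funext ⟨p, k⟩
    rcases Nat.mod_two_eq_zero_or_one k with hk | hk <;> simp [Nat.add_mod, hk]
  simp [h]

lemma isDistinctPartition_iff {π : List ℕ} :
    IsDistinctPartition π ↔ π.Pairwise (· > ·) ∧ ∀ p ∈ π, 0 < p := by
  rw [IsDistinctPartition, List.Chain', List.isChain_iff_pairwise]

lemma isDistinctPartition_nil : IsDistinctPartition [] := by simp [isDistinctPartition_iff]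

lemma isDistinctPartition_cons_iff {a : ℕ} {t : List ℕ} :
    IsDistinctPartition (a :: t) ↔ (∀ p ∈ t, p < a) ∧ 0 < a ∧ IsDistinctPartition t := by
  simp only [isDistinctPartition_iff, List.pairwise_cons, List.mem_cons, forall_eq_or_imp]
  tauto

def distinctParts : ℕ → Finset (List ℕ)
  | 0 => {[]}
  | M + 1 => distinctParts M ∪ (distinctParts M).map ⟨List.cons (M + 1), List.cons_injective⟩

lemma mem_distinctParts {M : ℕ} {π : List ℕ} :
    π ∈ distinctParts M ↔ IsDistinctPartition π ∧ ∀ p ∈ π, p ≤ M := by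
  induction M generalizing π with
  | zero =>
    cases π with
    | nil => simp [distinctParts, isDistinctPartition_nil]
    | cons a t => simp [distinctParts, isDistinctPartition_cons_iff]; omega
  | succ M ih =>
    simp only [distinctParts, mem_union, mem_map, Function.Embedding.coeFn_mk, ih]
    constructor
    · rintro (⟨hπ, hle⟩ | ⟨t, ⟨ht, hle⟩, rfl⟩)
      · exact ⟨hπ, fun p hp => (hle p hp).trans M.le_succ⟩
      · refine ⟨isDistinctPartition_cons_iff.2 ⟨fun p hp => Nat.lt_succ_of_le (hle p hp),
          M.succ_pos, ht⟩, ?_⟩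
        simpa using fun p hp => (hle p hp).trans M.le_succ
    · rintro ⟨hπ, hle⟩
      cases π with
      | nil => exact Or.inl ⟨hπ, by simp⟩
      | cons a t =>
        obtain ⟨hlt, -, ht⟩ := isDistinctPartition_cons_iff.1 hπ
        have ha : a ≤ M + 1 := hle a List.mem_cons_self
        rcases ha.lt_or_eq with ha | rfl
        · refine Or.inl ⟨hπ, ?_⟩
          simpa [Nat.lt_succ_iff.1 ha] using fun p hp => Nat.lt_succ_iff.1 ((hlt p hp).trans ha)
        · exact Or.inr ⟨t, ⟨ht, fun p hp => Nat.lt_succ_iff.1 (hlt p hp)⟩, rfl⟩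

lemma P_eq_sum (M i j : ℕ) :
    P M i j = ∑ π ∈ distinctParts M with oddIdxOdd π = i ∧ evenIdxOdd π = j,
      (X : PowerSeries ℚ) ^ π.sum := by
  ext n
  simp only [P, coeff_mk, map_sum, coeff_X_pow, sum_boole, filter_filter]
  exact congrArg _ <| Nat.subtype_card _ fun π => by
    simp only [mem_filter, mem_distinctParts]; grind

lemma P_succ (M i j : ℕ) :
    P (M + 1) i j = P M i j + X ^ (M + 1) *
      ∑ t ∈ distinctParts M with (M + 1) % 2 + evenIdxOdd t = i ∧ oddIdxOdd t = j,
        (X : PowerSeries ℚ) ^ t.sum := by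
  have hdisj : Disjoint (distinctParts M)
      ((distinctParts M).map ⟨List.cons (M + 1), List.cons_injective⟩) := by
    simp only [disjoint_left, mem_map, Function.Embedding.coeFn_mk, not_exists, not_and]
    rintro _ hπ t - rfl
    simpa using (mem_distinctParts.1 hπ).2 (M + 1) List.mem_cons_self
  rw [P_eq_sum, P_eq_sum, distinctParts, filter_union, sum_union (disjoint_filter_filter hdisj),
    filter_map, sum_map, mul_sum]
  simp [oddIdxOdd_cons, evenIdxOdd_cons, pow_add]

lemma P_two_mul_add_one_zero (N j : ℕ) : P (2 * N + 1) 0 j = P (2 * N) 0 j := by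
  rw [P_succ, filter_false_of_mem (by omega), sum_empty, mul_zero, add_zero]

lemma P_two_mul_add_one_succ (N i j : ℕ) :
    P (2 * N + 1) (i + 1) j = P (2 * N) (i + 1) j + X ^ (2 * N + 1) * P (2 * N) j i := by
  rw [P_succ, P_eq_sum (2 * N) j i]
  congr 2
  exact sum_congr (filter_congr fun t _ => by omega) fun _ _ => rfl

lemma P_two_mul_add_two (N i j : ℕ) :
    P (2 * N + 2) i j = P (2 * N + 1) i j + X ^ (2 * N + 2) * P (2 * N + 1) j i := by
  rw [P_succ, P_eq_sum (2 * N + 1) j i]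
  congr 2
  exact sum_congr (filter_congr fun t _ => by omega) fun _ _ => rfl

/-- `(-q²; q²)_k`. -/
noncomputable def negQSqPoch (k : ℕ) : PowerSeries ℚ :=
  ∏ n ∈ Finset.range k, (1 + X ^ (2 * n + 2))

/-- `[M; a, b]_{q⁴}`. -/
noncomputable def qTrinomialX4 (M a b : ℕ) : PowerSeries ℚ :=
  Polynomial.aeval (X ^ 4 : PowerSeries ℚ) (qTrinomial M a b)

lemma negQSqPoch_succ_mul (k : ℕ) :
    negQSqPoch (k + 1) * (1 - X ^ (2 * k + 2)) = negQSqPoch k * (1 - X ^ (4 * (k + 1))) := by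
  rw [negQSqPoch, Finset.prod_range_succ, ← negQSqPoch]
  ring

lemma qTrinomialX4_eq_zero_of_lt {M a b : ℕ} (h : M < a + b) : qTrinomialX4 M a b = 0 := by
  rw [qTrinomialX4, qTrinomial_eq_zero_of_lt h, map_zero]

lemma qTrinomialX4_comm (M a b : ℕ) : qTrinomialX4 M a b = qTrinomialX4 M b a := by
  rw [qTrinomialX4, qTrinomial_comm]; rfl

lemma qTrinomialX4_succ_mul (N a b : ℕ) :
    qTrinomialX4 (N + 1) a b * (1 - X ^ (4 * (N + 1 - a - b))) =
      qTrinomialX4 N a b * (1 - X ^ (4 * (N + 1))) := by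
  have h := congrArg (Polynomial.aeval (X ^ 4 : PowerSeries ℚ)) (qTrinomial_succ_mul N a b)
  simp only [map_mul, map_sub, map_one, map_pow, Polynomial.aeval_X, ← pow_mul] at h
  exact h

lemma qTrinomialX4_succ_succ_mul (N a b : ℕ) :
    qTrinomialX4 (N + 1) (a + 1) b * (1 - X ^ (4 * (a + 1))) =
      (1 - X ^ (4 * (N + 1))) * qTrinomialX4 N b a := by
  have h := congrArg (Polynomial.aeval (X ^ 4 : PowerSeries ℚ)) (qTrinomial_succ_succ_mul N a b)
  simp only [map_mul, map_sub, map_one, map_pow, Polynomial.aeval_X, ← pow_mul] at h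
  exact h

lemma negQSqPoch_mul_qTrinomialX4_succ (N a b : ℕ) :
    negQSqPoch (N + 1 - a - b) * qTrinomialX4 (N + 1) a b * (1 - X ^ (2 * (N + 1 - a - b))) =
      negQSqPoch (N - a - b) * qTrinomialX4 N a b * (1 - X ^ (4 * (N + 1))) := by
  rcases le_or_gt (a + b) N with h | h
  · have hk : N + 1 - a - b = N - a - b + 1 := by omega
    have hT := qTrinomialX4_succ_mul N a b
    rw [hk] at hT ⊢
    linear_combination negQSqPoch (N - a - b) * hT
      + qTrinomialX4 (N + 1) a b * negQSqPoch_succ_mul (N - a - b)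
  · rw [show N + 1 - a - b = 0 by omega, qTrinomialX4_eq_zero_of_lt h]
    ring

def leadExp (i j : ℕ) : ℕ := 2 * i ^ 2 - i + 2 * j ^ 2 + j

lemma leadExp_succ_left (i j : ℕ) : leadExp (i + 1) j = leadExp j i + 2 * (i + j) + 1 := by
  have hi : i ≤ 2 * i ^ 2 := by nlinarith
  have hj : j ≤ 2 * j ^ 2 := by nlinarith
  have hi1 : i + 1 ≤ 2 * (i + 1) ^ 2 := by nlinarith
  simp only [leadExp]
  zify [hi, hj, hi1]
  ring

lemma leadExp_add_swap (i j : ℕ) : leadExp i j + 2 * i = leadExp j i + 2 * j := by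
  have hi : i ≤ 2 * i ^ 2 := by nlinarith
  have hj : j ≤ 2 * j ^ 2 := by nlinarith
  simp only [leadExp]
  zify [hi, hj]
  ring

/-- The closed form of `P (2 * N) i j`. -/
noncomputable def evenClosedForm (N i j : ℕ) : PowerSeries ℚ :=
  X ^ leadExp i j * negQSqPoch (N - i - j) * qTrinomialX4 N i j

/-- The closed form of `P (2 * N + 1) i j`, multiplied by `1 - q^(4(N+1))`. -/
noncomputable def oddNumerator (N i j : ℕ) : PowerSeries ℚ :=
  X ^ leadExp i j * negQSqPoch (N + 1 - i - j) * qTrinomialX4 (N + 1) i j *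
    (1 - X ^ (2 * (N + i + 1 - j)))

lemma oddNumerator_zero_left (N j : ℕ) :
    oddNumerator N 0 j = evenClosedForm N 0 j * (1 - X ^ (4 * (N + 1))) := by
  have h := negQSqPoch_mul_qTrinomialX4_succ N 0 j
  rw [oddNumerator, evenClosedForm, show N + 0 + 1 - j = N + 1 - 0 - j by omega]
  linear_combination X ^ leadExp 0 j * h

lemma oddNumerator_succ_left (N i j : ℕ) :
    oddNumerator N (i + 1) j = (evenClosedForm N (i + 1) j +
      X ^ (2 * N + 1) * evenClosedForm N j i) * (1 - X ^ (4 * (N + 1))) := by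
  simp only [oddNumerator, evenClosedForm]
  rcases le_or_gt (i + j) N with h | h
  · have hA := negQSqPoch_mul_qTrinomialX4_succ N (i + 1) j
    have hB := qTrinomialX4_succ_succ_mul N i j
    have hexp : (X : PowerSeries ℚ) ^ (2 * N + 1) * X ^ leadExp j i =
        X ^ leadExp (i + 1) j * X ^ (2 * (N - i - j)) := by
      rw [← pow_add, ← pow_add, leadExp_succ_left]
      congr 1
      omega
    rw [show N + 1 - (i + 1) - j = N - i - j by omega] at hA ⊢
    rw [Nat.sub_right_comm N j i,
      show 2 * (N + (i + 1) + 1 - j) = 2 * (N - i - j) + 4 * (i + 1) by omega]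
    linear_combination X ^ leadExp (i + 1) j * hA
      + X ^ leadExp (i + 1) j * X ^ (2 * (N - i - j)) * negQSqPoch (N - i - j) * hB
      - negQSqPoch (N - i - j) * qTrinomialX4 N j i * (1 - X ^ (4 * (N + 1))) * hexp
  · rw [qTrinomialX4_eq_zero_of_lt (by omega : N + 1 < i + 1 + j),
      qTrinomialX4_eq_zero_of_lt (by omega : N < i + 1 + j),
      qTrinomialX4_eq_zero_of_lt (by omega : N < j + i)]
    ring

lemma evenClosedForm_succ_mul (N i j : ℕ) :
    evenClosedForm (N + 1) i j * (1 - X ^ (4 * (N + 1))) =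
      oddNumerator N i j + X ^ (2 * N + 2) * oddNumerator N j i := by
  simp only [oddNumerator, evenClosedForm]
  rcases le_or_gt (i + j) (N + 1) with h | h
  · have hexp : (X : PowerSeries ℚ) ^ (2 * N + 2) * X ^ leadExp j i =
        X ^ leadExp i j * X ^ (2 * (N + i + 1 - j)) := by
      rw [← pow_add, ← pow_add]
      have := leadExp_add_swap i j
      congr 1
      omega
    rw [Nat.sub_right_comm (N + 1) j i, qTrinomialX4_comm (N + 1) j i,
      show 4 * (N + 1) = 2 * (N + i + 1 - j) + 2 * (N + j + 1 - i) by omega]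
    linear_combination (-(negQSqPoch (N + 1 - i - j) * qTrinomialX4 (N + 1) i j *
      (1 - X ^ (2 * (N + j + 1 - i))))) * hexp
  · rw [qTrinomialX4_eq_zero_of_lt h, qTrinomialX4_eq_zero_of_lt (by omega : N + 1 < j + i)]
    ring

lemma one_sub_X_pow_ne_zero {k : ℕ} (hk : k ≠ 0) : (1 - X ^ k : PowerSeries ℚ) ≠ 0 :=
  fun h => by simpa [hk] using congrArg constantCoeff h

lemma P_zero (i j : ℕ) : P 0 i j = evenClosedForm 0 i j := by
  rw [P_eq_sum, distinctParts, filter_singleton, evenClosedForm]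
  by_cases h : i = 0 ∧ j = 0
  · obtain ⟨rfl, rfl⟩ := h
    simp [oddIdxOdd, evenIdxOdd, leadExp, negQSqPoch, qTrinomialX4, qTrinomial,
      gaussPoly_zero_right]
  · rw [if_neg fun h' => h ⟨h'.1.symm, h'.2.symm⟩, qTrinomialX4_eq_zero_of_lt (by omega),
      sum_empty, mul_zero]

lemma P_two_mul_add_one_mul (N : ℕ) (heven : ∀ i j, P (2 * N) i j = evenClosedForm N i j)
    (i j : ℕ) : P (2 * N + 1) i j * (1 - X ^ (4 * (N + 1))) = oddNumerator N i j := by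
  cases i with
  | zero => rw [P_two_mul_add_one_zero, heven, oddNumerator_zero_left]
  | succ i => rw [P_two_mul_add_one_succ, heven, heven, oddNumerator_succ_left]

lemma P_two_mul (N i j : ℕ) : P (2 * N) i j = evenClosedForm N i j := by
  induction N generalizing i j with
  | zero => exact P_zero i j
  | succ N ih =>
    refine mul_right_cancel₀ (one_sub_X_pow_ne_zero (by omega : 4 * (N + 1) ≠ 0)) ?_
    rw [show 2 * (N + 1) = 2 * N + 2 by ring, P_two_mul_add_two, add_mul, mul_assoc,
      P_two_mul_add_one_mul N ih, P_two_mul_add_one_mul N ih, evenClosedForm_succ_mul]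

theorem stmt3 (N i j : ℕ) :
    P (2 * N + 1) i j =
      PowerSeries.X ^ (2 * i ^ 2 - i + 2 * j ^ 2 + j) *
        (∏ n ∈ Finset.range (N + 1 - i - j), (1 + PowerSeries.X ^ (2 * n + 2))) *
        Polynomial.aeval (PowerSeries.X ^ 4 : PowerSeries ℚ)
          (gaussPoly (N + 1) i * gaussPoly (N + 1 - i) j) *
        (1 - PowerSeries.X ^ (2 * (N + i + 1 - j))) *
        (1 - PowerSeries.X ^ (4 * (N + 1)))⁻¹ := by
  rw [PowerSeries.eq_mul_inv_iff_mul_eq (by simp)]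
  exact P_two_mul_add_one_mul N (P_two_mul N) i j
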